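/- Let H = H_L ⊗ H_R be a bipartite finite-dimensional Hilbert space, Z ⊆ H a subspace, and V ⊆ H_L a subspace. Then V is δ-viable for Z (i.e., V ⊗ H_R is (1−δ)-majorizing for Z) if and only if the subspace Z̃ = (P_V ⊗ I_R)(Z) is δ-close to Z. -/

import Mathlib

/- STATEMENT 1: `V ⊆ H_L` is δ-viable for `Z ⊆ H_L ⊗ H_R` iff `Z̃ = (P_V ⊗ I_R)(Z)` is
δ-close to `Z`.  The bipartite space `H_L ⊗ H_R` is modelled as `EuclideanSpace ℂ (ι × κ)`. -/

variable {H : Type*} [NormedAddCommGroup H] [InnerProductSpace ℂ H] [FiniteDimensional ℂ H]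

/-- The map `ι_Y† ι_Z : Z → Y`. -/
noncomputable def overlapMap (Y Z : Submodule ℂ H) : Z → Y :=
  fun z => Y.orthogonalProjection (z : H)

/-- `Y` and `Z` are δ-close. -/
noncomputable def IsDeltaClose (δ : ℝ) (Y Z : Submodule ℂ H) : Prop :=
  Function.Bijective (overlapMap Y Z) ∧
    ∀ z : Z, (1 - δ) * ‖(z : H)‖ ^ 2 ≤ ‖(overlapMap Y Z z : H)‖ ^ 2

variable {ι κ : Type*} [Fintype ι] [Fintype κ] [DecidableEq ι] [DecidableEq κ]

/-- The subspace `V ⊗ H_R` of `H_L ⊗ H_R`: those vectors all of whose column slices lie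
in `V`. -/
def extendR (V : Submodule ℂ (EuclideanSpace ℂ ι)) :
    Submodule ℂ (EuclideanSpace ℂ (ι × κ)) where
  carrier := {ψ | ∀ j : κ, (WithLp.toLp 2 (fun i => ψ (i, j)) : EuclideanSpace ℂ ι) ∈ V}
  add_mem' := fun ha hb j => V.add_mem (ha j) (hb j)
  zero_mem' := fun j => V.zero_mem
  smul_mem' := fun c a ha j => V.smul_mem c (ha j)

/-- `V` is δ-viable for `Z`: the extension `V ⊗ H_R` is `(1-δ)`-majorizing for `Z`. -/
noncomputable def IsViable (δ : ℝ) (V : Submodule ℂ (EuclideanSpace ℂ ι))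
    (Z : Submodule ℂ (EuclideanSpace ℂ (ι × κ))) : Prop :=
  ∀ ψ ∈ Z, ‖ψ‖ = 1 →
    1 - δ ≤ ‖(((extendR (κ := κ) V).orthogonalProjection ψ :
        extendR (κ := κ) V) : EuclideanSpace ℂ (ι × κ))‖ ^ 2

/-- The subspace `Z̃ = (P_V ⊗ I_R)(Z)`, the image of `Z` under the orthogonal projection
onto `V ⊗ H_R` (which equals `P_V ⊗ I_R`). -/
noncomputable def projImage (V : Submodule ℂ (EuclideanSpace ℂ ι))
    (Z : Submodule ℂ (EuclideanSpace ℂ (ι × κ))) :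
    Submodule ℂ (EuclideanSpace ℂ (ι × κ)) :=
  Submodule.span ℂ
    ((fun ψ => (((extendR (κ := κ) V).orthogonalProjection ψ :
        extendR (κ := κ) V) : EuclideanSpace ℂ (ι × κ))) '' Z)

theorem stmt1 (δ : ℝ) (hδ0 : 0 ≤ δ) (hδ1 : δ < 1)
    (V : Submodule ℂ (EuclideanSpace ℂ ι))
    (Z : Submodule ℂ (EuclideanSpace ℂ (ι × κ))) :
    IsViable δ V Z ↔ IsDeltaClose δ (projImage V Z) Z := by
  set E : Submodule ℂ (EuclideanSpace ℂ (ι × κ)) := extendR (κ := κ) V with hEdef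
  set P : EuclideanSpace ℂ (ι × κ) →L[ℂ] EuclideanSpace ℂ (ι × κ) :=
    E.subtypeL.comp (E.orthogonalProjection) with hPdef
  have hPapp : ∀ ψ, P ψ = ((E.orthogonalProjection ψ : E) : EuclideanSpace ℂ (ι × κ)) :=
    fun ψ => rfl
  -- Z̃ ⊆ E
  have hZE : projImage V Z ≤ E := by
    apply Submodule.span_le.2
    rintro _ ⟨ψ, -, rfl⟩
    exact Subtype.coe_prop _
  -- key: overlapMap (projImage V Z) Z z = P z
  have hkey : ∀ z : Z, ((overlapMap (projImage V Z) Z z : _) : EuclideanSpace ℂ (ι × κ))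
      = P (z : EuclideanSpace ℂ (ι × κ)) := by
    intro z
    apply Submodule.eq_starProjection_of_mem_of_inner_eq_zero
    · exact Submodule.subset_span ⟨(z : EuclideanSpace ℂ (ι × κ)), z.2, rfl⟩
    · intro w hw
      have h1 : (z : EuclideanSpace ℂ (ι × κ)) - P (z : EuclideanSpace ℂ (ι × κ)) ∈ Eᗮ :=
        Submodule.sub_starProjection_mem_orthogonal _
      exact (Submodule.mem_orthogonal' _ _).1 h1 w (hZE hw)
  -- viability ↔ norm inequality for all z
  have hviab : IsViable δ V Z ↔ ∀ z : Z, (1 - δ) * ‖(z : EuclideanSpace ℂ (ι × κ))‖ ^ 2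
      ≤ ‖P (z : EuclideanSpace ℂ (ι × κ))‖ ^ 2 := by
    constructor
    · intro hv z
      by_cases hz : (z : EuclideanSpace ℂ (ι × κ)) = 0
      · simp [hz]
      · have hc : (0 : ℝ) < ‖(z : EuclideanSpace ℂ (ι × κ))‖ := norm_pos_iff.2 hz
        set c : ℝ := ‖(z : EuclideanSpace ℂ (ι × κ))‖ with hc'
        have hmem : ((c : ℂ))⁻¹ • (z : EuclideanSpace ℂ (ι × κ)) ∈ Z :=
          Z.smul_mem _ z.2
        have hnorm : ‖((c : ℂ))⁻¹ • (z : EuclideanSpace ℂ (ι × κ))‖ = 1 := by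
          rw [norm_smul]
          simp only [norm_inv, Complex.norm_real, Real.norm_eq_abs, abs_of_pos hc]
          field_simp
          exact hc'.symm
        have := hv _ hmem hnorm
        rw [← hPapp, map_smul, norm_smul] at this
        simp only [norm_inv, Complex.norm_real, Real.norm_eq_abs, abs_of_pos hc,
          mul_pow] at this
        have h2 : 1 - δ ≤ c⁻¹ ^ 2 * ‖P (z : EuclideanSpace ℂ (ι × κ))‖ ^ 2 := by
          simpa [inv_pow] using this
        calc (1 - δ) * c ^ 2 ≤ (c⁻¹ ^ 2 * ‖P (z : EuclideanSpace ℂ (ι × κ))‖ ^ 2) * c ^ 2 := by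
              nlinarith [sq_nonneg c]
          _ = ‖P (z : EuclideanSpace ℂ (ι × κ))‖ ^ 2 := by
              field_simp
    · intro h ψ hψ hψ1
      have := h ⟨ψ, hψ⟩
      rw [hψ1] at this
      simpa [hPapp] using this
  constructor
  · intro hv
    have hineq := hviab.1 hv
    have hpos : (0 : ℝ) < 1 - δ := by linarith
    refine ⟨⟨?_, ?_⟩, ?_⟩
    · -- injective
      intro z1 z2 he
      have h0 : P ((z1 : EuclideanSpace ℂ (ι × κ)) - z2) = 0 := by
        rw [map_sub, ← hkey z1, ← hkey z2, he, sub_self]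
      have hz : ((⟨(z1 : EuclideanSpace ℂ (ι × κ)) - z2, Z.sub_mem z1.2 z2.2⟩ : Z))
          = (z1 - z2 : Z) := rfl
      have := hineq ⟨(z1 : EuclideanSpace ℂ (ι × κ)) - z2, Z.sub_mem z1.2 z2.2⟩
      rw [h0] at this
      simp only [norm_zero] at this
      have : ‖(z1 : EuclideanSpace ℂ (ι × κ)) - z2‖ ^ 2 ≤ 0 := by nlinarith
      have hzz : (z1 : EuclideanSpace ℂ (ι × κ)) - z2 = 0 := by
        have := sq_nonneg ‖(z1 : EuclideanSpace ℂ (ι × κ)) - z2‖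
        have : ‖(z1 : EuclideanSpace ℂ (ι × κ)) - z2‖ = 0 := by nlinarith
        simpa using this
      exact Subtype.ext (sub_eq_zero.1 hzz)
    · -- surjective
      intro y
      have hyW : (y : EuclideanSpace ℂ (ι × κ)) ∈ Z.map (P : EuclideanSpace ℂ (ι × κ) →ₗ[ℂ] EuclideanSpace ℂ (ι × κ)) := by
        have hle : projImage V Z ≤ Z.map (P : EuclideanSpace ℂ (ι × κ) →ₗ[ℂ] EuclideanSpace ℂ (ι × κ)) := by
          apply Submodule.span_le.2
          rintro _ ⟨ψ, hψ, rfl⟩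
          exact ⟨ψ, hψ, rfl⟩
        exact hle y.2
      obtain ⟨z, hz, hzy⟩ := hyW
      exact ⟨⟨z, hz⟩, Subtype.ext (by rw [hkey]; exact hzy)⟩
    · intro z
      rw [hkey]
      exact hineq z
  · rintro ⟨-, h⟩
    apply hviab.2
    intro z
    have := h z
    rwa [hkey] at this
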